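/- arXiv:1905.10104 — 2 statements merged into one kernel-verified Lean document; each statement's English description precedes it below -/
import Mathlib

section
/- For the exact solution u ∈ H¹₀(Ω) of the elliptic problem (c∇u, ∇w) = (v, w) for all w ∈ H¹₀(Ω), and the discrete solution u_h ∈ U_h of (c∇u_h, ∇w)_{Q_h′} = (v, w)_{Q_h} for all w ∈ U_h, the error identity (c∇e_h, ∇e_h)_{Q_h′} = −r_h′(c∇I_hu, ∇e_h) − (c∇ε_h, ∇e_h) + r_h(v, e_h) holds, where e_h := I_hu − u_h, ε_h := u − I_hu, r_h(u,w) := (u,w) − (u,w)_{Q_h}, and r_h′(σ,τ) := (σ,τ) − (σ,τ)_{Q_h′}. -/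
/-- Error identity for the elliptic problem solved by the mass-lumped finite element
method with quadrature.  Here `V` plays the role of H¹₀(Ω), `W` the space of L²
vector fields, `grad` the gradient, `cmul` multiplication by the coefficient c,
`ipL`/`ipQ` the exact and quadrature L² inner products on scalars, and
`ip`/`ipQ'` the exact and quadrature L² inner products on vector fields. -/
theorem stmt_8 {V W : Type*} [AddCommGroup V] [Module ℝ V] [AddCommGroup W] [Module ℝ W]
    (grad : V →ₗ[ℝ] W) (cmul : W →ₗ[ℝ] W)
    (ip ipQ' : W →ₗ[ℝ] W →ₗ[ℝ] ℝ) (ipL ipQ : V →ₗ[ℝ] V →ₗ[ℝ] ℝ)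
    (Uh : Submodule ℝ V) (u v uh Ihu : V)
    (huh : uh ∈ Uh) (hIhu : Ihu ∈ Uh)
    -- continuous variational problem
    (hcont : ∀ w : V, ip (cmul (grad u)) (grad w) = ipL v w)
    -- discrete variational problem
    (hdisc : ∀ w ∈ Uh, ipQ' (cmul (grad uh)) (grad w) = ipQ v w) :
    let eh := Ihu - uh
    let εh := u - Ihu
    let rh : V → V → ℝ := fun a b => ipL a b - ipQ a b
    let rh' : W → W → ℝ := fun σ τ => ip σ τ - ipQ' σ τ
    ipQ' (cmul (grad eh)) (grad eh) =
      -(rh' (cmul (grad Ihu)) (grad eh)) - ip (cmul (grad εh)) (grad eh) + rh v eh := by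
  intro eh εh rh rh'
  have h1 := hdisc eh (Uh.sub_mem hIhu huh)
  have h2 := hcont eh
  simp only [rh, rh', eh, εh, map_sub, LinearMap.sub_apply] at *
  linarith
end

section
/- Let Ω = (−L₁,L₁)×(−L₂,L₂)×(−L₃,L₃), mᵢ := π/(2Lᵢ), aᵢ ∈ [0,1), Xᵢ(xᵢ) := xᵢ + (aᵢ/mᵢ)cos(mᵢxᵢ), gᵢ(xᵢ) := 1 − aᵢ sin(mᵢxᵢ), kᵢ := odd multiples of mᵢ, ω := c₀√(k₁²+k₂²+k₃²), ρ(x) := ρ₀g₁g₂g₃, and c(x) := c₀√((k₁²+k₂²+k₃²)/(k₁²g₁²+k₂²g₂²+k₃²g₃²)). Then the standing wave p(x,t) = cos(ωt) sin(k₁X₁(x₁)) sin(k₂X₂(x₂)) sin(k₃X₃(x₃)) satisfies the heterogeneous acoustic wave equation (1/(ρc²)) ∂ₜ²p = ∇·((1/ρ)∇p) on Ω × ℝ. -/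
/-! The warped coordinate Xᵢ has derivative gᵢ, so ψᵢ = sin (kᵢ Xᵢ) satisfies
(ψᵢ' / gᵢ)' = (kᵢ cos (kᵢ Xᵢ))' = -kᵢ² gᵢ ψᵢ. As ρ and p are products of one-variable factors,
the i-th term of ∇·((1/ρ)∇p) is -kᵢ² gᵢ² p / ρ, so the divergence is -(∑ kᵢ² gᵢ²) p / ρ.
The speed c is chosen so that ω² / c² = ∑ kᵢ² gᵢ², which matches ∂ₜ²p = -ω² p. -/

/-- Partial derivative in the i-th coordinate of a function on ℝ³. -/
noncomputable def pd (i : Fin 3) (F : (Fin 3 → ℝ) → ℝ) (x : Fin 3 → ℝ) : ℝ :=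
  deriv (fun s => F (Function.update x i s)) (x i)

open Real Finset Function

lemma one_sub_mul_sin_pos {a : ℝ} (ha : |a| < 1) (θ : ℝ) : 0 < 1 - a * sin θ := by
  have : a * sin θ ≤ |a| := by
    calc a * sin θ ≤ |a * sin θ| := le_abs_self _
      _ = |a| * |sin θ| := abs_mul a (sin θ)
      _ ≤ |a| := mul_le_of_le_one_right (abs_nonneg a) (abs_sin_le_one θ)
  linarith

lemma hasDerivAt_add_div_mul_cos (a m s : ℝ) :
    HasDerivAt (fun u => u + a / m * cos (m * u)) (1 - a * sin (m * s)) s := by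
  refine ((hasDerivAt_id' s).add
    (((hasDerivAt_id' s).const_mul m).cos.const_mul (a / m))).congr_deriv ?_
  rcases eq_or_ne m 0 with rfl | hm
  · simp
  · field_simp
    ring

lemma deriv_deriv_cos_mul (ω A t : ℝ) :
    deriv (deriv fun τ => cos (ω * τ) * A) t = -ω ^ 2 * (cos (ω * t) * A) := by
  have h1 : deriv (fun τ => cos (ω * τ) * A) = fun τ => -ω * sin (ω * τ) * A := by
    funext τ
    rw [(((hasDerivAt_id' τ).const_mul ω).cos.mul_const A).deriv]
    ring
  rw [h1, ((((hasDerivAt_id' t).const_mul ω).sin.const_mul (-ω)).mul_const A).deriv]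
  ring

lemma prod_apply_update {ι α M : Type*} [Fintype ι] [DecidableEq ι] [CommMonoid M]
    (f : ι → α → M) (x : ι → α) (i : ι) (s : α) :
    ∏ j, f j (update x i s j) = f i s * ∏ j ∈ univ.erase i, f j (x j) := by
  simp_rw [apply_update f x i s, prod_update_of_mem (mem_univ i), sdiff_singleton_eq_erase]

lemma deriv_div_mul_deriv_sin_comp {X g : ℝ → ℝ} (hX : ∀ u, HasDerivAt X (g u) u)
    (hg : ∀ u, g u ≠ 0) (k C D s : ℝ) :
    deriv (fun u => 1 / (g u * D) * deriv (fun v => C * sin (k * X v)) u) s =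
      -(k ^ 2 * g s ^ 2) / (g s * D) * (C * sin (k * X s)) := by
  have hcos : (fun u => 1 / (g u * D) * deriv (fun v => C * sin (k * X v)) u) =
      fun u => C * k / D * cos (k * X u) := by
    funext u
    rw [(((hX u).const_mul k).sin.const_mul C).deriv]
    field_simp [hg u]
  rw [hcos, (((hX s).const_mul k).cos.const_mul (C * k / D)).deriv]
  field_simp [hg s]

lemma pd_div_mul_pd_prod_sin {X g : Fin 3 → ℝ → ℝ} {i : Fin 3}
    (hX : ∀ u, HasDerivAt (X i) (g i u) u) (hg : ∀ u, g i u ≠ 0) (k : Fin 3 → ℝ) (A B : ℝ)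
    (x : Fin 3 → ℝ) :
    pd i (fun y => 1 / (A * ∏ j, g j (y j)) * pd i (fun z => B * ∏ j, sin (k j * X j (z j))) y) x
      = -(k i ^ 2 * g i (x i) ^ 2) / (A * ∏ j, g j (x j)) * (B * ∏ j, sin (k j * X j (x j))) := by
  have hsep : (fun s => 1 / (A * ∏ j, g j (update x i s j)) *
        deriv (fun s' => B * ∏ j, sin (k j * X j (update (update x i s) i s' j))) (update x i s i))
      = fun u => 1 / (g i u * (A * ∏ j ∈ univ.erase i, g j (x j))) *
        deriv (fun v => B * (∏ j ∈ univ.erase i, sin (k j * X j (x j))) * sin (k i * X i v)) u := by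
    funext u
    simp only [update_self, update_idem, prod_apply_update (fun j => g j),
      prod_apply_update (fun j y => sin (k j * X j y))]
    congr 1
    · ring
    · congr 1
      funext v
      ring
  unfold pd
  rw [hsep, deriv_div_mul_deriv_sin_comp hX hg, ← mul_prod_erase univ _ (mem_univ i),
    ← mul_prod_erase univ (fun j => sin (k j * X j (x j))) (mem_univ i)]
  ring

theorem stmt_12_general (L a : Fin 3 → ℝ) (hL : ∀ i, 0 < L i)
    (ha : ∀ i, a i ∈ Set.Ico (0 : ℝ) 1)
    (ρ₀ c₀ : ℝ) (hc₀ : 0 < c₀)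
    (n : Fin 3 → ℕ) :
    let m : Fin 3 → ℝ := fun i => Real.pi / (2 * L i)
    let k : Fin 3 → ℝ := fun i => (2 * (n i : ℝ) + 1) * m i
    let Xc : Fin 3 → ℝ → ℝ := fun i s => s + (a i / m i) * Real.cos (m i * s)
    let g : Fin 3 → ℝ → ℝ := fun i s => 1 - a i * Real.sin (m i * s)
    let ω : ℝ := c₀ * Real.sqrt (k 0 ^ 2 + k 1 ^ 2 + k 2 ^ 2)
    let ρ : (Fin 3 → ℝ) → ℝ := fun x => ρ₀ * g 0 (x 0) * g 1 (x 1) * g 2 (x 2)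
    let c : (Fin 3 → ℝ) → ℝ := fun x => c₀ * Real.sqrt ((k 0 ^ 2 + k 1 ^ 2 + k 2 ^ 2) /
      (k 0 ^ 2 * g 0 (x 0) ^ 2 + k 1 ^ 2 * g 1 (x 1) ^ 2 + k 2 ^ 2 * g 2 (x 2) ^ 2))
    let p : (Fin 3 → ℝ) → ℝ → ℝ := fun x t => Real.cos (ω * t) *
      (Real.sin (k 0 * Xc 0 (x 0)) * Real.sin (k 1 * Xc 1 (x 1)) * Real.sin (k 2 * Xc 2 (x 2)))
    ∀ x : Fin 3 → ℝ, (∀ i, |x i| < L i) → ∀ t : ℝ,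
      (1 / (ρ x * c x ^ 2)) * deriv (deriv (fun τ => p x τ)) t =
        ∑ i : Fin 3, pd i (fun y => (1 / ρ y) * pd i (fun z => p z t) y) x := by
  intro m k Xc g ω ρ c p x _ t
  have hρ : ∀ y, ρ y = ρ₀ * ∏ j, g j (y j) := fun y => by
    simp only [ρ, Fin.prod_univ_three, mul_assoc]
  have hp : ∀ z, p z t = cos (ω * t) * ∏ j, sin (k j * Xc j (z j)) := fun z => by
    simp only [p, Fin.prod_univ_three, mul_assoc]
  have hspace : ∀ i, pd i (fun y => 1 / ρ y * pd i (fun z => p z t) y) x =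
      -(k i ^ 2 * g i (x i) ^ 2) / ρ x * p x t := by
    intro i
    simp only [hρ, hp]
    exact pd_div_mul_pd_prod_sin (fun u => hasDerivAt_add_div_mul_cos (a i) (m i) u)
      (fun u => (one_sub_mul_sin_pos (abs_lt.2 ⟨by linarith [(ha i).1], (ha i).2⟩) _).ne') k _ _ x
  have hK : k 0 ^ 2 + k 1 ^ 2 + k 2 ^ 2 ≠ 0 := by
    have : 0 < k 0 := mul_pos (by positivity) (div_pos pi_pos (by linarith [hL 0]))
    positivity
  have hωc : ω ^ 2 / c x ^ 2 = ∑ i, k i ^ 2 * g i (x i) ^ 2 := by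
    simp only [ω, c, mul_pow, sq_sqrt (by positivity : (0 : ℝ) ≤ k 0 ^ 2 + k 1 ^ 2 + k 2 ^ 2),
      sq_sqrt (by positivity : (0 : ℝ) ≤ (k 0 ^ 2 + k 1 ^ 2 + k 2 ^ 2) /
        (k 0 ^ 2 * g 0 (x 0) ^ 2 + k 1 ^ 2 * g 1 (x 1) ^ 2 + k 2 ^ 2 * g 2 (x 2) ^ 2)),
      ← mul_div_assoc, div_div_cancel₀ (mul_ne_zero (pow_ne_zero 2 hc₀.ne') hK), Fin.sum_univ_three]
  have htime : deriv (deriv fun τ => p x τ) t = -ω ^ 2 * p x t := deriv_deriv_cos_mul _ _ _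
  rw [htime, Fintype.sum_congr _ _ hspace, ← Finset.sum_mul, ← Finset.sum_div,
    Finset.sum_neg_distrib, ← hωc, hρ x]
  ring

/-- The distorted standing wave satisfies the heterogeneous acoustic wave
equation (1/(ρc²)) ∂ₜ²p = ∇·((1/ρ)∇p) on Ω × ℝ. -/
theorem stmt_12 (L a : Fin 3 → ℝ) (hL : ∀ i, 0 < L i)
    (ha : ∀ i, a i ∈ Set.Ico (0 : ℝ) 1)
    (ρ₀ c₀ : ℝ) (hρ₀ : 0 < ρ₀) (hc₀ : 0 < c₀)
    (n : Fin 3 → ℕ) :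
    let m : Fin 3 → ℝ := fun i => Real.pi / (2 * L i)
    let k : Fin 3 → ℝ := fun i => (2 * (n i : ℝ) + 1) * m i
    let Xc : Fin 3 → ℝ → ℝ := fun i s => s + (a i / m i) * Real.cos (m i * s)
    let g : Fin 3 → ℝ → ℝ := fun i s => 1 - a i * Real.sin (m i * s)
    let ω : ℝ := c₀ * Real.sqrt (k 0 ^ 2 + k 1 ^ 2 + k 2 ^ 2)
    let ρ : (Fin 3 → ℝ) → ℝ := fun x => ρ₀ * g 0 (x 0) * g 1 (x 1) * g 2 (x 2)
    let c : (Fin 3 → ℝ) → ℝ := fun x => c₀ * Real.sqrt ((k 0 ^ 2 + k 1 ^ 2 + k 2 ^ 2) /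
      (k 0 ^ 2 * g 0 (x 0) ^ 2 + k 1 ^ 2 * g 1 (x 1) ^ 2 + k 2 ^ 2 * g 2 (x 2) ^ 2))
    let p : (Fin 3 → ℝ) → ℝ → ℝ := fun x t => Real.cos (ω * t) *
      (Real.sin (k 0 * Xc 0 (x 0)) * Real.sin (k 1 * Xc 1 (x 1)) * Real.sin (k 2 * Xc 2 (x 2)))
    ∀ x : Fin 3 → ℝ, (∀ i, |x i| < L i) → ∀ t : ℝ,
      (1 / (ρ x * c x ^ 2)) * deriv (deriv (fun τ => p x τ)) t =
        ∑ i : Fin 3, pd i (fun y => (1 / ρ y) * pd i (fun z => p z t) y) x :=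
  stmt_12_general L a hL ha ρ₀ c₀ hc₀ n
end
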